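/- For every real u ≥ 0, the Laplace transform of the random series I_q := ∑_{k=0}^∞ q^k E_{k+1} satisfies E[e^{−u I_q}] = ∏_{j=0}^∞ ( 1 + (u/λ) q^j )^{−1}, where the infinite product converges; in the q-Pochhammer notation, E[e^{−u I_q}] = 1/(−u/λ; q)_∞. -/

import Mathlib

/-!
By independence, the Laplace transform of a partial sum `∑_{k ∈ s} q^k E_k` factorises, and each
factor is `E[exp(-u q^k E)] = (1 + u q^k / λ)⁻¹` by a direct computation against the exponential
density. The series converges almost surely because its terms have summable `L¹` norms, and since
the `E_k` are nonnegative, the integrands `exp(-u S)` are bounded by `1`; dominated convergence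
then turns the finite products into the infinite one.
-/

open MeasureTheory ProbabilityTheory Real Set Filter
open scoped ENNReal

lemma mgf_id_expMeasure {r t : ℝ} (hr : 0 < r) (ht : t < r) :
    mgf id (expMeasure r) t = r / (r - t) := by
  have hdensity : (fun x => (exponentialPDF r x).toReal • exp (t * x))
      = (Ici 0).indicator (fun x => r * exp ((t - r) * x)) := by
    ext x
    by_cases hx : 0 ≤ x
    · rw [exponentialPDF_eq, if_pos hx, ENNReal.toReal_ofReal (by positivity), smul_eq_mul,
        indicator_of_mem (mem_Ici.2 hx), mul_assoc, ← exp_add]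
      ring_nf
    · simp [exponentialPDF_eq, hx]
  rw [mgf, show expMeasure r = volume.withDensity (exponentialPDF r) from rfl,
    integral_withDensity_eq_integral_toReal_smul (f := exponentialPDF r)
      (measurable_exponentialPDFReal r).ennreal_ofReal
      (ae_of_all _ fun _ => ENNReal.ofReal_lt_top)]
  simp only [id]
  rw [hdensity, integral_indicator measurableSet_Ici, integral_Ici_eq_integral_Ioi,
    integral_const_mul, integral_exp_mul_Ioi (by linarith), mul_zero, exp_zero, neg_div,
    ← div_neg, neg_sub, mul_one_div]

lemma mgf_of_map_eq_expMeasure {Ω : Type*} [MeasurableSpace Ω] {P : Measure Ω} {Y : Ω → ℝ}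
    {r t : ℝ} (hY : AEMeasurable Y P) (hmap : P.map Y = expMeasure r) (hr : 0 < r) (ht : t < r) :
    mgf Y P t = r / (r - t) := by
  rw [← mgf_id_map hY, hmap, mgf_id_expMeasure hr ht]

lemma integrable_exp_mul_expMeasure {r t : ℝ} (hr : 0 < r) (ht : t < r) :
    Integrable (fun x => exp (t * x)) (expMeasure r) := by
  have := isProbabilityMeasure_expMeasure hr
  -- `mgf` takes the junk value `0` off the integrability domain.
  refine (mgf_pos_iff (X := id)).1 ?_
  rw [mgf_id_expMeasure hr ht]
  exact div_pos hr (sub_pos.2 ht)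

lemma integrable_id_expMeasure {r : ℝ} (hr : 0 < r) :
    Integrable (fun x => x) (expMeasure r) := by
  simpa using integrable_pow_of_integrable_exp_mul (X := id) (half_pos hr).ne'
    (integrable_exp_mul_expMeasure hr (half_lt_self hr))
    (integrable_exp_mul_expMeasure hr (by linarith)) 1

lemma ae_nonneg_expMeasure (r : ℝ) : ∀ᵐ x ∂expMeasure r, 0 ≤ x := by
  rw [ae_iff]
  simp only [not_le]
  change volume.withDensity (exponentialPDF r) (Iio 0) = 0
  rw [withDensity_apply _ measurableSet_Iio]
  exact lintegral_exponentialPDF_of_nonpos le_rfl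

section RandomSeries

variable {Ω ι : Type*} [MeasurableSpace Ω] {P : Measure Ω} [Countable ι]
  {X : ι → Ω → ℝ}

lemma ae_summable_mul_of_eLpNorm_le {a : ι → ℝ} {C : ℝ≥0∞} (ha : Summable a)
    (hX : ∀ i, AEStronglyMeasurable (X i) P) (hC : C ≠ ∞)
    (hbound : ∀ i, eLpNorm (X i) 1 P ≤ C) :
    ∀ᵐ ω ∂P, Summable fun i => a i * X i ω := by
  have hnorm : ∑' i, ‖a i‖ₑ ≠ ∞ := tsum_enorm_ne_top_iff_summable_norm.2 ha.abs
  have h := summable_norm_of_tsum_eLpNorm_ne_top le_rfl (f := fun i ω => a i * X i ω)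
    (fun i => (hX i).const_mul (a i)) ?_
  · filter_upwards [h] with ω hω using hω.of_norm
  · refine ne_top_of_le_ne_top (ENNReal.mul_ne_top hnorm hC) ?_
    calc ∑' i, eLpNorm (fun ω => a i * X i ω) 1 P = ∑' i, ‖a i‖ₑ * eLpNorm (X i) 1 P :=
          tsum_congr fun i => eLpNorm_const_smul (a i) (X i) 1 P
      _ ≤ ∑' i, ‖a i‖ₑ * C := by gcongr with i; exact hbound i
      _ = (∑' i, ‖a i‖ₑ) * C := ENNReal.tsum_mul_right

theorem hasProd_mgf_tsum (hindep : iIndepFun X P) (hmeas : ∀ i, Measurable (X i))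
    (hnonneg : ∀ i, 0 ≤ᵐ[P] X i) (hsum : ∀ᵐ ω ∂P, Summable fun i => X i ω) {t : ℝ}
    (ht : t ≤ 0) : HasProd (fun i => mgf (X i) P t) (mgf (fun ω => ∑' i, X i ω) P t) := by
  have := hindep.isProbabilityMeasure
  unfold HasProd
  simp_rw [← hindep.mgf_sum hmeas, mgf, Finset.sum_apply]
  refine tendsto_integral_filter_of_dominated_convergence (fun _ => 1) ?_ ?_
    (integrable_const 1) ?_
  · exact Eventually.of_forall fun s =>
      ((Finset.measurable_sum s fun i _ => hmeas i).const_mul t).exp.aestronglyMeasurable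
  · filter_upwards with s
    filter_upwards [ae_all_iff.2 hnonneg] with ω hω
    rw [norm_of_nonneg (exp_pos _).le, exp_le_one_iff]
    exact mul_nonpos_of_nonpos_of_nonneg ht (Finset.sum_nonneg fun i _ => hω i)
  · filter_upwards [hsum] with ω hω
    exact (continuous_exp.tendsto _).comp (hω.hasSum.const_mul t)

end RandomSeries

theorem stmt19_general
    {Ω : Type*} [MeasurableSpace Ω] (P : Measure Ω)
    (lam q : ℝ) (hlam : 0 < lam) (hq0 : 0 < q) (hq1 : q < 1)
    (E : ℕ → Ω → ℝ)
    (hEmeas : ∀ k, Measurable (E k))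
    (hEexp : ∀ k, Measure.map (E k) P = expMeasure lam)
    (hIndep : iIndepFun E P)
    (Iq : Ω → ℝ) (hIq : ∀ ω, Iq ω = ∑' k : ℕ, q ^ k * E k ω) :
    ∀ u : ℝ, 0 ≤ u →
      Multipliable (fun j : ℕ => 1 + (u / lam) * q ^ j) ∧
      ∫ ω, Real.exp (-(u * Iq ω)) ∂P = (∏' j : ℕ, (1 + (u / lam) * q ^ j))⁻¹ := by
  intro u hu
  have hgeom : Summable fun k : ℕ => q ^ k := summable_geometric_of_lt_one hq0.le hq1
  have hmult := Real.multipliable_one_add_of_summable (hgeom.mul_left (u / lam))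
  refine ⟨hmult, ?_⟩
  have hmgf (k : ℕ) : mgf (fun ω => q ^ k * E k ω) P (-u) = (1 + u / lam * q ^ k)⁻¹ := by
    have hpos : 0 < lam + q ^ k * u := by positivity
    rw [mgf_const_mul, mgf_of_map_eq_expMeasure (hEmeas k).aemeasurable (hEexp k) hlam
      (by linarith), mul_neg, sub_neg_eq_add]
    field_simp
  have hsum : ∀ᵐ ω ∂P, Summable fun k => q ^ k * E k ω := by
    refine ae_summable_mul_of_eLpNorm_le hgeom (fun k => (hEmeas k).aestronglyMeasurable)
      (memLp_one_iff_integrable.2 (integrable_id_expMeasure hlam)).eLpNorm_ne_top fun k => ?_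
    rw [← hEexp k, eLpNorm_map_measure (g := fun x => x) aestronglyMeasurable_id
      (hEmeas k).aemeasurable]
    rfl
  have hnonneg (k : ℕ) : 0 ≤ᵐ[P] fun ω => q ^ k * E k ω := by
    filter_upwards [ae_of_ae_map (hEmeas k).aemeasurable (hEexp k ▸ ae_nonneg_expMeasure lam)]
      with ω hω using mul_nonneg (pow_nonneg hq0.le k) hω
  have hprod := hasProd_mgf_tsum (X := fun k ω => q ^ k * E k ω)
    (hIndep.comp (fun k x => q ^ k * x) fun k => measurable_const_mul _)
    (fun k => (hEmeas k).const_mul _) hnonneg hsum (neg_nonpos.2 hu)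
  simp_rw [hmgf, mgf, ← hIq, neg_mul] at hprod
  have hone := hprod.mul hmult.hasProd
  simp_rw [inv_mul_cancel₀ (by positivity : (1 : ℝ) + u / lam * q ^ _ ≠ 0)] at hone
  exact eq_inv_of_mul_eq_one_left (hasProd_one.unique hone).symm

/-- for every `u ≥ 0`, the Laplace transform of the exponential Poisson
functional `I_q = ∑ₖ q^k E_{k+1}` satisfies
`E[e^{-u I_q}] = (∏_j (1 + (u/λ) q^j))⁻¹ = 1/(-u/λ; q)_∞`, the infinite product
converging. -/
theorem stmt19
    {Ω : Type*} [MeasurableSpace Ω] (P : Measure Ω) [IsProbabilityMeasure P]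
    (lam q : ℝ) (hlam : 0 < lam) (hq0 : 0 < q) (hq1 : q < 1)
    (E : ℕ → Ω → ℝ)
    (hEmeas : ∀ k, Measurable (E k))
    (hEexp : ∀ k, Measure.map (E k) P = expMeasure lam)
    (hIndep : iIndepFun E P)
    (Iq : Ω → ℝ) (hIq : ∀ ω, Iq ω = ∑' k : ℕ, q ^ k * E k ω) :
    ∀ u : ℝ, 0 ≤ u →
      Multipliable (fun j : ℕ => 1 + (u / lam) * q ^ j) ∧
      ∫ ω, Real.exp (-(u * Iq ω)) ∂P = (∏' j : ℕ, (1 + (u / lam) * q ^ j))⁻¹ :=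
  stmt19_general P lam q hlam hq0 hq1 E hEmeas hEexp hIndep Iq hIq
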